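/- arXiv:1512.07797 — 6 statements merged into one kernel-verified Lean document; each statement's English description precedes it below -/
import Mathlib

section
/- Let l : 2^V → ℝ be a set function with l(∅) = 0 and l(A) ≥ 0 for all A ⊆ V. Then the slack-rescaling surrogate S_l is an extension of l (i.e. S_l(1_A) = l(A) for every A ⊆ V) if and only if l is increasing. -/
open Finset

/-- The chain {σ₁,…,σⱼ}: the image under σ of the first j indices. -/
def chainSet {p : ℕ} (σ : Equiv.Perm (Fin p)) (j : ℕ) : Finset (Fin p) :=
  (Finset.univ.filter fun k : Fin p => (k : ℕ) < j).image σ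

/-- G_l(σ, s) = Σ_{j=1}^p s_{σ_j}·(l({σ₁,…,σⱼ}) − l({σ₁,…,σ_{j−1}})). -/
def lovaszSum {p : ℕ} (l : Finset (Fin p) → ℝ) (σ : Equiv.Perm (Fin p))
    (s : Fin p → ℝ) : ℝ :=
  ∑ j : Fin p, s (σ j) * (l (chainSet σ ((j : ℕ) + 1)) - l (chainSet σ (j : ℕ)))

/-- Indicator vector 1_A ∈ {0,1}^p of A ⊆ V. -/
def indic {p : ℕ} (A : Finset (Fin p)) : Fin p → ℝ := fun i => if i ∈ A then 1 else 0

/-- A permutation sorting s in decreasing order: s_{π_1} ≥ … ≥ s_{π_p}. -/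
def SortsDesc {p : ℕ} (π : Equiv.Perm (Fin p)) (s : Fin p → ℝ) : Prop :=
  ∀ j k : Fin p, j ≤ k → s (π k) ≤ s (π j)

/-- A canonical permutation sorting s in decreasing order. -/
noncomputable def sortDesc {p : ℕ} (s : Fin p → ℝ) : Equiv.Perm (Fin p) :=
  Tuple.sort (fun i => -s i)

/-- The Lovász extension ℓ̂(s) = G_l(π, s) for a permutation π sorting s
decreasingly (independent of the choice of such π). -/
noncomputable def lovaszExt {p : ℕ} (l : Finset (Fin p) → ℝ) (s : Fin p → ℝ) : ℝ :=
  lovaszSum l (sortDesc s) s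

/-- Submodularity: l(A) + l(B) ≥ l(A ∪ B) + l(A ∩ B). -/
def Submodular {p : ℕ} (l : Finset (Fin p) → ℝ) : Prop :=
  ∀ A B : Finset (Fin p), l (A ∪ B) + l (A ∩ B) ≤ l A + l B

/-- The slack-rescaling surrogate S_l(s) = max_{I⊆V} l(I)·(1 − 2 Σ_{i∈I}(1 − s_i)). -/
noncomputable def slackSur {p : ℕ} (l : Finset (Fin p) → ℝ) (s : Fin p → ℝ) : ℝ :=
  Finset.univ.sup' Finset.univ_nonempty
    (fun I : Finset (Fin p) => l I * (1 - 2 * ∑ i ∈ I, (1 - s i)))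

/-- The margin-rescaling surrogate M_l(s) = max_{I⊆V} ( l(I) − 2 Σ_{i∈I}(1 − s_i) ). -/
noncomputable def marginSur {p : ℕ} (l : Finset (Fin p) → ℝ) (s : Fin p → ℝ) : ℝ :=
  Finset.univ.sup' Finset.univ_nonempty
    (fun I : Finset (Fin p) => l I - 2 * ∑ i ∈ I, (1 - s i))

/-- The Lovász hinge, general (non-monotonic) case. -/
noncomputable def hingeGen {p : ℕ} (l : Finset (Fin p) → ℝ) (s : Fin p → ℝ) : ℝ :=
  Finset.univ.sup' Finset.univ_nonempty
    (fun σ : Equiv.Perm (Fin p) => max 0 (lovaszSum l σ s))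

/-- The Lovász hinge, increasing case (componentwise thresholding). -/
noncomputable def hingeInc {p : ℕ} (l : Finset (Fin p) → ℝ) (s : Fin p → ℝ) : ℝ :=
  Finset.univ.sup' Finset.univ_nonempty
    (fun σ : Equiv.Perm (Fin p) =>
      ∑ j : Fin p, max (s (σ j)) 0 *
        (l (chainSet σ ((j : ℕ) + 1)) - l (chainSet σ (j : ℕ))))

/-!
At `1_A` the term of `S_l` indexed by `I` is `l(I) · (1 - 2|I \ A|)`: it equals `l(I)` when
`I ⊆ A` and is nonpositive otherwise, because `l ≥ 0`. Hence `S_l(1_A) = max_{I ⊆ A} l(I)`,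
which equals `l(A)` for every `A` exactly when `l` is increasing.
-/

lemma sum_one_sub_indic {p : ℕ} (I A : Finset (Fin p)) :
    ∑ i ∈ I, (1 - indic A i) = (#(I \ A) : ℝ) := by
  have h : ∀ i, 1 - indic A i = if i ∉ A then (1 : ℝ) else 0 := by
    intro i
    by_cases hi : i ∈ A <;> simp [indic, hi]
  rw [sum_congr rfl fun i _ => h i, sum_boole, sdiff_eq_filter]

lemma slackSur_indic {p : ℕ} (l : Finset (Fin p) → ℝ) (A : Finset (Fin p)) :
    slackSur l (indic A) =
      univ.sup' univ_nonempty fun I : Finset (Fin p) => l I * (1 - 2 * (#(I \ A) : ℝ)) := by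
  simp only [slackSur, sum_one_sub_indic]

lemma le_slackSur_indic_of_subset {p : ℕ} (l : Finset (Fin p) → ℝ) {I A : Finset (Fin p)}
    (hIA : I ⊆ A) : l I ≤ slackSur l (indic A) := by
  rw [slackSur_indic]
  refine le_trans (le_of_eq ?_) (le_sup' _ (mem_univ I))
  simp [sdiff_eq_empty_iff_subset.mpr hIA]

lemma slackSur_indic_le {p : ℕ} {l : Finset (Fin p) → ℝ} (hnn : ∀ A, 0 ≤ l A)
    (hmono : ∀ A B : Finset (Fin p), A ⊆ B → l A ≤ l B) (A : Finset (Fin p)) :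
    slackSur l (indic A) ≤ l A := by
  rw [slackSur_indic]
  refine sup'_le _ _ fun I _ => ?_
  by_cases hIA : I ⊆ A
  · simpa [sdiff_eq_empty_iff_subset.mpr hIA] using hmono I A hIA
  · have hcard : (1 : ℝ) ≤ #(I \ A) := by
      exact_mod_cast card_pos.mpr (sdiff_nonempty.mpr hIA)
    have hterm : l I * (1 - 2 * (#(I \ A) : ℝ)) ≤ 0 :=
      mul_nonpos_of_nonneg_of_nonpos (hnn I) (by linarith)
    exact hterm.trans (hnn A)

theorem slack_extension_iff_increasing_general (p : ℕ)
    (l : Finset (Fin p) → ℝ) (hnn : ∀ A : Finset (Fin p), 0 ≤ l A) :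
    (∀ A : Finset (Fin p), slackSur l (indic A) = l A) ↔
      (∀ A B : Finset (Fin p), A ⊆ B → l A ≤ l B) := by
  constructor
  · intro hext A B hAB
    exact hext B ▸ le_slackSur_indic_of_subset l hAB
  · intro hmono A
    exact le_antisymm (slackSur_indic_le hnn hmono A) (le_slackSur_indic_of_subset l subset_rfl)

/-- slack rescaling yields an extension iff the loss is increasing. -/
theorem slack_extension_iff_increasing (p : ℕ) (hp : 1 ≤ p)
    (l : Finset (Fin p) → ℝ) (h0 : l ∅ = 0) (hnn : ∀ A : Finset (Fin p), 0 ≤ l A) :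
    (∀ A : Finset (Fin p), slackSur l (indic A) = l A) ↔
      (∀ A B : Finset (Fin p), A ⊆ B → l A ≤ l B) :=
  slack_extension_iff_increasing_general p l hnn
end

section
/- Let l : 2^V → ℝ be submodular with l(∅) = 0, let s ∈ ℝ^p have all coordinates nonnegative, let π be a permutation of {1,…,p} with s_{π_1} ≥ s_{π_2} ≥ … ≥ s_{π_p}, and define μ ∈ ℝ^p by μ_{π_j} = l({π_1,…,π_j}) − l({π_1,…,π_{j−1}}) for j = 1,…,p. Then for every x in the submodular polyhedron P(l) one has ⟨s, x⟩ ≤ ⟨s, μ⟩ = ℓ̂(s); that is, the greedy vector μ maximizes ⟨s, ·⟩ over P(l) with optimal value the Lovász extension ℓ̂(s). -/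
open Finset

/-! Along the chain `∅ = C₀ ⊆ C₁ ⊆ ⋯ ⊆ C_p = V` with `Cⱼ = {π₁,…,πⱼ}`, summation by parts gives
`⟨s, v⟩ = ∑ⱼ (s_{πⱼ} - s_{πⱼ₊₁}) · v(Cⱼ)` (with `s_{π_{p+1}} = 0`), a combination of the chain sums
`v(Cⱼ) = ∑_{i ∈ Cⱼ} vᵢ` with nonnegative weights. The greedy vector is tight on the chain,
`μ(Cⱼ) = l(Cⱼ)`, while every `x ∈ P(l)` has `x(Cⱼ) ≤ l(Cⱼ)`; hence `⟨s, x⟩ ≤ ⟨s, μ⟩`. -/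

section Chain

variable {p : ℕ} (π : Equiv.Perm (Fin p))

lemma chainSet_zero : chainSet π 0 = ∅ := by
  simp [chainSet]

lemma chainSet_succ (j : Fin p) :
    chainSet π ((j : ℕ) + 1) = insert (π j) (chainSet π j) := by
  rw [chainSet, chainSet, ← image_insert]
  congr 1
  ext k
  simp only [mem_insert, mem_filter, mem_univ, true_and, Nat.lt_succ_iff_lt_or_eq, Fin.ext_iff]
  tauto

lemma apply_notMem_chainSet (j : Fin p) : π j ∉ chainSet π j := by
  simp [chainSet]

noncomputable def permSeq (s : Fin p → ℝ) (j : ℕ) : ℝ :=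
  if h : j < p then s (π ⟨j, h⟩) else 0

lemma permSeq_coe (s : Fin p → ℝ) (j : Fin p) : permSeq π s j = s (π j) := by
  simp [permSeq]

lemma permSeq_succ_le {s : Fin p → ℝ} (hs : ∀ i, 0 ≤ s i) (hπ : SortsDesc π s) {j : ℕ}
    (hj : j < p) : permSeq π s (j + 1) ≤ permSeq π s j := by
  by_cases hj' : j + 1 < p
  · simpa [permSeq, hj, hj'] using hπ ⟨j, hj⟩ ⟨j + 1, hj'⟩ (by simp [Fin.le_def])
  · simpa [permSeq, hj, hj'] using hs _

lemma sum_mul_eq_sum_range_chainSet (s v : Fin p → ℝ) :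
    ∑ i, s i * v i = ∑ j ∈ range p,
      permSeq π s j * (∑ i ∈ chainSet π (j + 1), v i - ∑ i ∈ chainSet π j, v i) := by
  rw [← Equiv.sum_comp π, ← Fin.sum_univ_eq_sum_range (fun j => permSeq π s j *
    (∑ i ∈ chainSet π (j + 1), v i - ∑ i ∈ chainSet π j, v i))]
  refine sum_congr rfl fun j _ => ?_
  rw [permSeq_coe, chainSet_succ, sum_insert (apply_notMem_chainSet π j), add_sub_cancel_right]

end Chain

/-- By summation by parts the difference of the two sides is
`∑ j < n, (t j - t (j + 1)) * D (j + 1) ≥ 0`. -/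
lemma mul_le_sum_range_mul_sub {R : Type*} [CommRing R] [PartialOrder R] [IsOrderedRing R]
    {t D : ℕ → R} (n : ℕ) (ht : ∀ j < n, t (j + 1) ≤ t j) (hD₀ : D 0 = 0)
    (hD : ∀ j ≤ n, 0 ≤ D j) :
    t n * D n ≤ ∑ j ∈ range n, t j * (D (j + 1) - D j) := by
  induction n with
  | zero => simp [hD₀]
  | succ n ih =>
    have ih := ih (fun j hj => ht j (by omega)) (fun j hj => hD j (by omega))
    have hstep : t (n + 1) * D (n + 1) ≤ t n * D (n + 1) :=
      mul_le_mul_of_nonneg_right (ht n n.lt_succ_self) (hD _ le_rfl)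
    rw [sum_range_succ]
    linear_combination hstep + ih

lemma sum_mul_nonneg_of_sum_chainSet_nonneg {p : ℕ} {s : Fin p → ℝ} (hs : ∀ i, 0 ≤ s i)
    {π : Equiv.Perm (Fin p)} (hπ : SortsDesc π s) {v : Fin p → ℝ}
    (hv : ∀ j ≤ p, 0 ≤ ∑ i ∈ chainSet π j, v i) :
    0 ≤ ∑ i, s i * v i := by
  rw [sum_mul_eq_sum_range_chainSet π]
  refine le_trans ?_ (mul_le_sum_range_mul_sub p (fun j hj => permSeq_succ_le π hs hπ hj)
    (by simp [chainSet_zero]) hv)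
  simp [permSeq]

section Greedy

variable {p : ℕ} {l : Finset (Fin p) → ℝ} {π : Equiv.Perm (Fin p)} {μ : Fin p → ℝ}

lemma sum_chainSet_greedy
    (hμ : ∀ j : Fin p, μ (π j) = l (chainSet π ((j : ℕ) + 1)) - l (chainSet π (j : ℕ)))
    (h0 : l ∅ = 0) {j : ℕ} (hj : j ≤ p) :
    ∑ i ∈ chainSet π j, μ i = l (chainSet π j) := by
  induction j with
  | zero => simp [chainSet_zero, h0]
  | succ j ih =>
    have hjp : j < p := hj
    rw [chainSet_succ π ⟨j, hjp⟩, sum_insert (apply_notMem_chainSet π _), ih hjp.le, hμ,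
      chainSet_succ]
    ring

lemma sum_mul_greedy_eq_lovaszSum
    (hμ : ∀ j : Fin p, μ (π j) = l (chainSet π ((j : ℕ) + 1)) - l (chainSet π (j : ℕ)))
    (s : Fin p → ℝ) :
    ∑ i, s i * μ i = lovaszSum l π s := by
  rw [← Equiv.sum_comp π, lovaszSum]
  simp only [hμ]

end Greedy

theorem greedy_maximizes_over_submodular_polyhedron_general (p : ℕ)
    (l : Finset (Fin p) → ℝ) (h0 : l ∅ = 0)
    (s : Fin p → ℝ) (hs : ∀ i, 0 ≤ s i)
    (π : Equiv.Perm (Fin p)) (hπ : SortsDesc π s)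
    (μ : Fin p → ℝ)
    (hμ : ∀ j : Fin p, μ (π j) = l (chainSet π ((j : ℕ) + 1)) - l (chainSet π (j : ℕ))) :
    (∀ x : Fin p → ℝ,
        (∀ A : Finset (Fin p), ∑ i ∈ A, x i ≤ l A) →
        ∑ i : Fin p, s i * x i ≤ ∑ i : Fin p, s i * μ i) ∧
      ∑ i : Fin p, s i * μ i = lovaszSum l π s := by
  refine ⟨fun x hx => ?_, sum_mul_greedy_eq_lovaszSum hμ s⟩
  have hgap : 0 ≤ ∑ i, s i * (μ - x) i := by
    refine sum_mul_nonneg_of_sum_chainSet_nonneg hs hπ fun j hj => ?_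
    simpa [sum_sub_distrib, sum_chainSet_greedy hμ h0 hj] using hx (chainSet π j)
  simpa [mul_sub, sum_sub_distrib] using hgap

/-- the greedy vector μ maximizes ⟨s,·⟩ over the submodular
polyhedron P(l), with optimal value the Lovász extension G_l(π,s). -/
theorem greedy_maximizes_over_submodular_polyhedron (p : ℕ) (hp : 1 ≤ p)
    (l : Finset (Fin p) → ℝ) (hsub : Submodular l) (h0 : l ∅ = 0)
    (s : Fin p → ℝ) (hs : ∀ i, 0 ≤ s i)
    (π : Equiv.Perm (Fin p)) (hπ : SortsDesc π s)
    (μ : Fin p → ℝ)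
    (hμ : ∀ j : Fin p, μ (π j) = l (chainSet π ((j : ℕ) + 1)) - l (chainSet π (j : ℕ))) :
    (∀ x : Fin p → ℝ,
        (∀ A : Finset (Fin p), ∑ i ∈ A, x i ≤ l A) →
        ∑ i : Fin p, s i * x i ≤ ∑ i : Fin p, s i * μ i) ∧
      ∑ i : Fin p, s i * μ i = lovaszSum l π s :=
  greedy_maximizes_over_submodular_polyhedron_general p l h0 s hs π hπ μ hμ
end

section
/- Let l : 2^V → ℝ be submodular with l(∅) = 0, and suppose the margin-rescaling surrogate M_l is an extension of l, i.e. M_l(1_A) = l(A) for every A ⊆ V. Then for every s ∈ [0,1]^p, M_l(s) ≤ ℓ̂(s); that is, the Lovász extension has equal or higher value than margin rescaling inside the unit cube. -/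
/-!
On the cube, with π sorting s decreasingly and chains Cⱼ = {π₁,…,πⱼ}, the vector s is the convex
combination Σⱼ λⱼ 1_{Cⱼ} with weights λⱼ = s_{πⱼ} − s_{πⱼ₊₁} (where s_{π₀} = 1, s_{π_{p+1}} = 0),
and Abel summation shows ℓ̂(s) = Σⱼ λⱼ l(Cⱼ) when l(∅) = 0. As a maximum of affine functions, M_l is
convex, so Jensen's inequality and the extension property give
M_l(s) ≤ Σⱼ λⱼ M_l(1_{Cⱼ}) = Σⱼ λⱼ l(Cⱼ) = ℓ̂(s).
-/

open Finset

theorem ConvexOn.finset_sup' {𝕜 E β ι : Type*} [Semiring 𝕜] [PartialOrder 𝕜]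
    [AddCommMonoid E] [AddCommMonoid β] [LinearOrder β] [IsOrderedAddMonoid β]
    [SMul 𝕜 E] [Module 𝕜 β] [PosSMulStrictMono 𝕜 β] {s : Set E}
    {t : Finset ι} (ht : t.Nonempty) {f : ι → E → β} (hf : ∀ i ∈ t, ConvexOn 𝕜 s (f i)) :
    ConvexOn 𝕜 s (t.sup' ht f) :=
  Finset.sup'_induction ht f (fun _ hg _ hh => hg.sup hh) hf

theorem convexOn_marginSur {p : ℕ} (l : Finset (Fin p) → ℝ) :
    ConvexOn ℝ Set.univ (marginSur l) := by
  have hfun : marginSur l =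
      univ.sup' univ_nonempty fun I (s : Fin p → ℝ) => l I - 2 * ∑ i ∈ I, (1 - s i) := by
    funext s
    rw [Finset.sup'_apply]
    rfl
  rw [hfun]
  refine ConvexOn.finset_sup' _ fun I _ => ⟨convex_univ, fun x _ y _ a b _ _ hab => le_of_eq ?_⟩
  have hsplit : ∀ i, 1 - (a • x + b • y) i = a * (1 - x i) + b * (1 - y i) := fun i => by
    simp only [Pi.add_apply, Pi.smul_apply, smul_eq_mul]
    linear_combination -hab
  simp only [hsplit, sum_add_distrib, ← mul_sum, smul_eq_mul]
  linear_combination -(l I) * hab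

theorem mem_chainSet {p : ℕ} {σ : Equiv.Perm (Fin p)} {j : ℕ} {i : Fin p} :
    i ∈ chainSet σ j ↔ (σ.symm i : ℕ) < j := by
  simp only [chainSet, mem_image, mem_filter, mem_univ, true_and]
  exact ⟨fun ⟨k, hk, hki⟩ => by simpa [← hki] using hk,
    fun h => ⟨σ.symm i, h, σ.apply_symm_apply i⟩⟩

theorem chainSet_zero_s11 {p : ℕ} (σ : Equiv.Perm (Fin p)) : chainSet σ 0 = ∅ := by
  ext i
  simp [mem_chainSet]

theorem sortsDesc_sortDesc {p : ℕ} (s : Fin p → ℝ) : SortsDesc (sortDesc s) s :=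
  fun _ _ hjk => neg_le_neg_iff.mp (Tuple.monotone_sort (fun i => -s i) hjk)

/-- `1, s_{π_1}, …, s_{π_p}, 0, 0, …` -/
noncomputable def paddedValues {p : ℕ} (π : Equiv.Perm (Fin p)) (s : Fin p → ℝ) : ℕ → ℝ
  | 0 => 1
  | j + 1 => if h : j < p then s (π ⟨j, h⟩) else 0

noncomputable def chainWeight {p : ℕ} (π : Equiv.Perm (Fin p)) (s : Fin p → ℝ) (j : ℕ) : ℝ :=
  paddedValues π s j - paddedValues π s (j + 1)

theorem sum_chainWeight {p : ℕ} (π : Equiv.Perm (Fin p)) (s : Fin p → ℝ) :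
    ∑ j ∈ range (p + 1), chainWeight π s j = 1 := by
  unfold chainWeight
  rw [sum_range_sub']
  simp [paddedValues]

theorem chainWeight_nonneg {p : ℕ} {π : Equiv.Perm (Fin p)} {s : Fin p → ℝ}
    (hπ : SortsDesc π s) (hs0 : 0 ≤ s) (hs1 : s ≤ 1) (j : ℕ) : 0 ≤ chainWeight π s j := by
  rcases j with _ | j
  · simp only [chainWeight, paddedValues]
    split_ifs
    · exact sub_nonneg.mpr (hs1 _)
    · norm_num
  · simp only [chainWeight, paddedValues]
    split_ifs with h1 h2
    · exact sub_nonneg.mpr (hπ ⟨j, h1⟩ ⟨j + 1, h2⟩ (Fin.mk_le_mk.mpr j.le_succ))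
    · exact sub_nonneg.mpr (hs0 _)
    · omega
    · norm_num

theorem sum_chainWeight_smul_indic_chainSet {p : ℕ} (π : Equiv.Perm (Fin p)) (s : Fin p → ℝ) :
    ∑ j ∈ range (p + 1), chainWeight π s j • indic (chainSet π j) = s := by
  funext i
  have hk := (π.symm i).isLt
  have hfilter : (range (p + 1)).filter (fun j => i ∈ chainSet π j) =
      Ico ((π.symm i : ℕ) + 1) (p + 1) := by
    ext j
    simp only [mem_filter, mem_range, mem_Ico, mem_chainSet]
    omega
  simp only [Finset.sum_apply, Pi.smul_apply, indic, smul_eq_mul, mul_ite, mul_one, mul_zero,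
    ← sum_filter, hfilter]
  unfold chainWeight
  rw [sum_Ico_eq_sub _ (by omega), sum_range_sub', sum_range_sub']
  simp [paddedValues, hk]

theorem lovaszSum_eq_sum_chainWeight_mul {p : ℕ} {l : Finset (Fin p) → ℝ} (h0 : l ∅ = 0)
    (π : Equiv.Perm (Fin p)) (s : Fin p → ℝ) :
    lovaszSum l π s = ∑ j ∈ range (p + 1), chainWeight π s j * l (chainSet π j) := by
  have hvalue : ∀ j : Fin p, s (π j) = paddedValues π s (j + 1) := by simp [paddedValues]
  simp only [lovaszSum, hvalue]
  rw [Fin.sum_univ_eq_sum_range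
    (fun j => paddedValues π s (j + 1) * (l (chainSet π (j + 1)) - l (chainSet π j)))]
  simp only [chainWeight, sub_mul, mul_sub, sum_sub_distrib]
  rw [sum_range_succ' (fun j => paddedValues π s j * l (chainSet π j)),
    sum_range_succ (fun j => paddedValues π s (j + 1) * l (chainSet π j))]
  simp [chainSet_zero_s11, h0, paddedValues]

theorem margin_le_lovasz_on_cube_general (p : ℕ)
    (l : Finset (Fin p) → ℝ) (h0 : l ∅ = 0)
    (hext : ∀ A : Finset (Fin p), marginSur l (indic A) = l A) :
    ∀ s ∈ Set.Icc (0 : Fin p → ℝ) 1, marginSur l s ≤ lovaszExt l s := by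
  rintro s ⟨hs0, hs1⟩
  set π := sortDesc s
  calc marginSur l s
      = marginSur l (∑ j ∈ range (p + 1), chainWeight π s j • indic (chainSet π j)) := by
        rw [sum_chainWeight_smul_indic_chainSet]
    _ ≤ ∑ j ∈ range (p + 1), chainWeight π s j • marginSur l (indic (chainSet π j)) :=
        (convexOn_marginSur l).map_sum_le
          (fun j _ => chainWeight_nonneg (sortsDesc_sortDesc s) hs0 hs1 j)
          (sum_chainWeight π s) (fun _ _ => Set.mem_univ _)
    _ = lovaszExt l s := by
        simp only [hext, smul_eq_mul]
        exact (lovaszSum_eq_sum_chainWeight_mul h0 π s).symm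

/-- if margin rescaling yields an extension of a submodular l,
then inside the unit cube it is dominated by the Lovász extension. -/
theorem margin_le_lovasz_on_cube (p : ℕ) (hp : 1 ≤ p)
    (l : Finset (Fin p) → ℝ) (hsub : Submodular l) (h0 : l ∅ = 0)
    (hext : ∀ A : Finset (Fin p), marginSur l (indic A) = l A) :
    ∀ s ∈ Set.Icc (0 : Fin p → ℝ) 1, marginSur l s ≤ lovaszExt l s :=
  margin_le_lovasz_on_cube_general p l h0 hext
end

section
/- The Jaccard loss satisfies the diminishing-returns inequality for marginal false negatives: for every i ∈ P and all subsets B ⊆ A ⊆ V with i ∉ A, one has l_J(A ∪ {i}) − l_J(A) ≤ l_J(B ∪ {i}) − l_J(B). (Indeed, l_J(A ∪ {i}) − l_J(A) = 1/(m + |A \ P|) for such i.) -/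
open Finset

/-- The Jaccard loss as a set function of the set A of mispredicted elements,
for a ground-truth positive set P: l_J(A) = |A| / (|P| + |A \ P|). -/
noncomputable def jaccardLoss {p : ℕ} (P : Finset (Fin p)) (A : Finset (Fin p)) : ℝ :=
  (A.card : ℝ) / ((P.card : ℝ) + ((A \ P).card : ℝ))

section

variable {p : ℕ} {P A B : Finset (Fin p)} {i : Fin p}

lemma jaccardLoss_denom_pos (hi : i ∈ P) (A : Finset (Fin p)) :
    (0 : ℝ) < (P.card : ℝ) + ((A \ P).card : ℝ) := by
  have : 0 < P.card := card_pos.mpr ⟨i, hi⟩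
  positivity

/-- Adding a false negative leaves the denominator unchanged and raises the numerator by one. -/
lemma jaccardLoss_insert_sub_of_mem (hi : i ∈ P) (hiA : i ∉ A) :
    jaccardLoss P (insert i A) - jaccardLoss P A =
      1 / ((P.card : ℝ) + ((A \ P).card : ℝ)) := by
  rw [jaccardLoss, jaccardLoss, insert_sdiff_of_mem A hi, card_insert_of_notMem hiA,
    Nat.cast_succ, ← sub_div, add_sub_cancel_left]

lemma jaccardLoss_denom_mono (hBA : B ⊆ A) :
    (P.card : ℝ) + ((B \ P).card : ℝ) ≤ (P.card : ℝ) + ((A \ P).card : ℝ) := by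
  gcongr

end

theorem jaccard_diminishing_returns_false_negative_general (p : ℕ)
    (P : Finset (Fin p))
    (i : Fin p) (hi : i ∈ P) (A B : Finset (Fin p)) (hBA : B ⊆ A) (hiA : i ∉ A) :
    jaccardLoss P (insert i A) - jaccardLoss P A ≤
        jaccardLoss P (insert i B) - jaccardLoss P B ∧
      jaccardLoss P (insert i A) - jaccardLoss P A =
        1 / ((P.card : ℝ) + ((A \ P).card : ℝ)) := by
  have hiB : i ∉ B := fun h => hiA (hBA h)
  refine ⟨?_, jaccardLoss_insert_sub_of_mem hi hiA⟩
  rw [jaccardLoss_insert_sub_of_mem hi hiA, jaccardLoss_insert_sub_of_mem hi hiB]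
  exact one_div_le_one_div_of_le (jaccardLoss_denom_pos hi B) (jaccardLoss_denom_mono hBA)

/-- diminishing returns of the Jaccard loss for marginal false
negatives (i ∈ P), with the marginal cost equal to 1/(m + |A \ P|). -/
theorem jaccard_diminishing_returns_false_negative (p : ℕ) (hp : 1 ≤ p)
    (P : Finset (Fin p)) (hP : P.Nonempty)
    (i : Fin p) (hi : i ∈ P) (A B : Finset (Fin p)) (hBA : B ⊆ A) (hiA : i ∉ A) :
    jaccardLoss P (insert i A) - jaccardLoss P A ≤
        jaccardLoss P (insert i B) - jaccardLoss P B ∧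
      jaccardLoss P (insert i A) - jaccardLoss P A =
        1 / ((P.card : ℝ) + ((A \ P).card : ℝ)) :=
  jaccard_diminishing_returns_false_negative_general p P i hi A B hBA hiA
end

section
/- The Jaccard loss satisfies the diminishing-returns inequality for marginal false positives: for every i ∈ V \ P and all subsets B ⊆ A ⊆ V with i ∉ A, one has l_J(A ∪ {i}) − l_J(A) ≤ l_J(B ∪ {i}) − l_J(B). -/
/-!
Since `m + |A \ P| = |P ∪ A|`, the loss is `l_J(A) = |A| / |P ∪ A|`. Adding a false positive
`i ∉ P ∪ A` raises numerator and denominator by one, so its marginal gain is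
`|P \ A| / (|P ∪ A| * (|P ∪ A| + 1))`. As `A` grows the numerator shrinks and the denominator
grows, which is the diminishing-returns inequality.
-/

open Finset

theorem div_add_one_sub_div {K : Type*} [Field K] {n d : K} (hd : d ≠ 0) (hd₁ : d + 1 ≠ 0) :
    (n + 1) / (d + 1) - n / d = (d - n) / (d * (d + 1)) := by
  field_simp
  ring

section Jaccard

variable {p : ℕ} {P A : Finset (Fin p)} {i : Fin p}

theorem jaccardLoss_eq_card_div_card_union (P A : Finset (Fin p)) :
    jaccardLoss P A = #A / #(P ∪ A) := by
  rw [jaccardLoss, union_comm, ← card_sdiff_add_card A P]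
  push_cast
  ring

theorem jaccardLoss_insert_sub_of_notMem (hP : P.Nonempty) (hiP : i ∉ P) (hiA : i ∉ A) :
    jaccardLoss P (insert i A) - jaccardLoss P A = #(P \ A) / (#(P ∪ A) * (#(P ∪ A) + 1)) := by
  have hiPA : i ∉ P ∪ A := by simp [hiP, hiA]
  have hPA : (#(P ∪ A) : ℝ) ≠ 0 := by
    exact_mod_cast (card_pos.2 (hP.mono subset_union_left)).ne'
  have hcard : (#(P \ A) : ℝ) = #(P ∪ A) - #A := by
    rw [← card_sdiff_add_card P A]
    push_cast
    ring
  rw [jaccardLoss_eq_card_div_card_union, jaccardLoss_eq_card_div_card_union, union_insert,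
    card_insert_of_notMem hiA, card_insert_of_notMem hiPA, hcard]
  push_cast
  exact div_add_one_sub_div hPA (by positivity)

end Jaccard

theorem jaccard_diminishing_returns_false_positive_general (p : ℕ)
    (P : Finset (Fin p)) (hP : P.Nonempty)
    (i : Fin p) (hi : i ∉ P) (A B : Finset (Fin p)) (hBA : B ⊆ A) (hiA : i ∉ A) :
    jaccardLoss P (insert i A) - jaccardLoss P A ≤
      jaccardLoss P (insert i B) - jaccardLoss P B := by
  have hiB : i ∉ B := fun h => hiA (hBA h)
  rw [jaccardLoss_insert_sub_of_notMem hP hi hiA, jaccardLoss_insert_sub_of_notMem hP hi hiB]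
  gcongr

/-- diminishing returns of the Jaccard loss for marginal false
positives (i ∉ P). -/
theorem jaccard_diminishing_returns_false_positive (p : ℕ) (hp : 1 ≤ p)
    (P : Finset (Fin p)) (hP : P.Nonempty)
    (i : Fin p) (hi : i ∉ P) (A B : Finset (Fin p)) (hBA : B ⊆ A) (hiA : i ∉ A) :
    jaccardLoss P (insert i A) - jaccardLoss P A ≤
      jaccardLoss P (insert i B) - jaccardLoss P B :=
  jaccard_diminishing_returns_false_positive_general p P hP i hi A B hBA hiA
end

section
/- The Jaccard loss l_J is a submodular set function: for all A, B ⊆ V, l_J(A) + l_J(B) ≥ l_J(A ∪ B) + l_J(A ∩ B). -/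
open Finset

/-!
Writing `m = |P|`, one has `l_J(A) = 1 - (m - |A ∩ P|) / (m + |A \ P|)`, so submodularity of
`l_J` is supermodularity of the product of `A ↦ m - |A ∩ P|` (modular) and
`A ↦ 1 / (m + |A \ P|)` (supermodular by convexity of `t ↦ 1 / (m + t)`). Both factors are
nonnegative and antitone, and such products of supermodular functions are supermodular.
-/

def IsSupermodular {α R : Type*} [Lattice α] [Add R] [LE R] (f : α → R) : Prop :=
  ∀ a b, f a + f b ≤ f (a ⊔ b) + f (a ⊓ b)

theorem IsSupermodular.mul {α R : Type*} [Lattice α] [CommRing R] [LinearOrder R]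
    [IsStrictOrderedRing R] {f g : α → R} (hf : IsSupermodular f) (hg : IsSupermodular g)
    (hf₀ : ∀ a, 0 ≤ f a) (hg₀ : ∀ a, 0 ≤ g a) (hf_anti : Antitone f) (hg_anti : Antitone g) :
    IsSupermodular (f * g) := by
  intro a b
  have hfa := hf_anti (le_sup_left : a ≤ a ⊔ b)
  have hfb := hf_anti (le_sup_right : b ≤ a ⊔ b)
  have hga := hg_anti (le_sup_left : a ≤ a ⊔ b)
  have hgb := hg_anti (le_sup_right : b ≤ a ⊔ b)
  have hf_inf : f a + f b - f (a ⊔ b) ≤ f (a ⊓ b) := by linarith [hf a b]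
  have hg_inf : g a + g b - g (a ⊔ b) ≤ g (a ⊓ b) := by linarith [hg a b]
  have h_inf : (f a + f b - f (a ⊔ b)) * (g a + g b - g (a ⊔ b)) ≤ f (a ⊓ b) * g (a ⊓ b) :=
    mul_le_mul hf_inf hg_inf (by linarith [hg₀ a]) (hf₀ _)
  -- this sum is the left side of `h_inf` plus `f (a ⊔ b) * g (a ⊔ b) - f a * g a - f b * g b`
  have h_cross :
      0 ≤ (f a - f (a ⊔ b)) * (g b - g (a ⊔ b)) + (f b - f (a ⊔ b)) * (g a - g (a ⊔ b)) :=
    add_nonneg (mul_nonneg (by linarith) (by linarith)) (mul_nonneg (by linarith) (by linarith))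
  simp only [Pi.mul_apply]
  linarith

theorem inv_add_inv_le_inv_add_inv {K : Type*} [Field K] [LinearOrder K] [IsStrictOrderedRing K]
    {a b c d : K} (ha : 0 < a) (hab : a ≤ b) (hac : a ≤ c) (hsum : b + c = d + a) :
    b⁻¹ + c⁻¹ ≤ d⁻¹ + a⁻¹ := by
  have hb : 0 < b := ha.trans_le hab
  have hc : 0 < c := ha.trans_le hac
  have hbd : b ≤ d := by linarith
  calc b⁻¹ + c⁻¹ = b⁻¹ + (c⁻¹ - d⁻¹) + d⁻¹ := by ring
    _ = b⁻¹ + (b - a) / (c * d) + d⁻¹ := by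
        rw [inv_sub_inv hc.ne' (hb.trans_le hbd).ne', show d - c = b - a by linarith]
    _ ≤ b⁻¹ + (b - a) / (a * b) + d⁻¹ := by
        gcongr
    _ = d⁻¹ + a⁻¹ := by rw [← inv_sub_inv ha.ne' hb.ne']; ring

section Card

variable {α : Type*} [DecidableEq α]

theorem card_inter_union_add_card_inter_inter (A B P : Finset α) :
    #((A ∪ B) ∩ P) + #((A ∩ B) ∩ P) = #(A ∩ P) + #(B ∩ P) := by
  rw [union_inter_distrib_right, inter_inter_distrib_right, card_union_add_card_inter]

theorem card_sdiff_union_add_card_sdiff_inter (A B P : Finset α) :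
    #((A ∪ B) \ P) + #((A ∩ B) \ P) = #(A \ P) + #(B \ P) := by
  rw [union_sdiff_distrib, ← inf_eq_inter, inf_sdiff, inf_eq_inter, card_union_add_card_inter]

theorem isSupermodular_sub_card_inter {R : Type*} [CommRing R] [PartialOrder R]
    [IsOrderedRing R] (c : R) (P : Finset α) :
    IsSupermodular fun A : Finset α ↦ c - #(A ∩ P) := by
  intro A B
  have := congrArg (Nat.cast : ℕ → R) (card_inter_union_add_card_inter_inter A B P)
  push_cast at this
  simp only [sup_eq_union, inf_eq_inter]
  exact le_of_eq (by linear_combination this)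

theorem isSupermodular_inv_add_card_sdiff {K : Type*} [Field K] [LinearOrder K]
    [IsStrictOrderedRing K] {c : K} (hc : 0 < c) (P : Finset α) :
    IsSupermodular fun A : Finset α ↦ (c + #(A \ P))⁻¹ := by
  intro A B
  have hsum := congrArg (Nat.cast : ℕ → K) (card_sdiff_union_add_card_sdiff_inter A B P)
  push_cast at hsum
  simp only [sup_eq_union, inf_eq_inter]
  refine inv_add_inv_le_inv_add_inv (by positivity) ?_ ?_ (by linear_combination -hsum)
  · gcongr; exact inter_subset_left
  · gcongr; exact inter_subset_right

end Card

theorem jaccardLoss_eq_one_sub_mul {p : ℕ} {P : Finset (Fin p)} (hP : P.Nonempty)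
    (A : Finset (Fin p)) :
    jaccardLoss P A = 1 - (#P - #(A ∩ P)) * ((#P : ℝ) + #(A \ P))⁻¹ := by
  have hpos : (0 : ℝ) < #P + #(A \ P) := by positivity
  have hA : (#A : ℝ) = #(A ∩ P) + #(A \ P) := mod_cast (card_inter_add_card_sdiff A P).symm
  rw [jaccardLoss, hA]
  field_simp
  ring

theorem jaccard_submodular_general (p : ℕ)
    (P : Finset (Fin p)) (hP : P.Nonempty) :
    ∀ A B : Finset (Fin p),
      jaccardLoss P (A ∪ B) + jaccardLoss P (A ∩ B) ≤
        jaccardLoss P A + jaccardLoss P B := by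
  have hm : (0 : ℝ) < #P := by exact_mod_cast hP.card_pos
  have key := (isSupermodular_sub_card_inter (#P : ℝ) P).mul
    (isSupermodular_inv_add_card_sdiff hm P)
    (fun A ↦ sub_nonneg.2 (by exact_mod_cast card_le_card inter_subset_right))
    (fun A ↦ by positivity)
    (fun A B h ↦ sub_le_sub_left (by exact_mod_cast card_le_card (inter_subset_inter_right h)) _)
    (fun A B h ↦ inv_anti₀ (by positivity) (by gcongr))
  intro A B
  have hAB := key A B
  simp only [Pi.mul_apply, sup_eq_union, inf_eq_inter] at hAB
  simp only [jaccardLoss_eq_one_sub_mul hP]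
  linarith

/-- the Jaccard loss is submodular. -/
theorem jaccard_submodular (p : ℕ) (hp : 1 ≤ p)
    (P : Finset (Fin p)) (hP : P.Nonempty) :
    ∀ A B : Finset (Fin p),
      jaccardLoss P (A ∪ B) + jaccardLoss P (A ∩ B) ≤
        jaccardLoss P A + jaccardLoss P B :=
  jaccard_submodular_general p P hP
end
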